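/- In the abstract compactness-multiplier setting on L²(μ), assume additionally the basic estimate: there exists A > 0 with ‖u‖² ≤ A·(Q(u) + N(u)) for all u ∈ D. If f_j are multipliers and f_j → f uniformly (in sup norm), then f is a multiplier. (The set of compactness multipliers is closed under uniform limits.) -/

import Mathlib

open MeasureTheory Filter

/-!
Since `‖f u‖² ≤ 2 ‖f - f_j‖²_∞ ‖u‖² + 2 ‖f_j u‖²` and the basic estimate bounds `‖u‖²` by
`A (Q u + N u)`, choosing `j` with `‖f - f_j‖²_∞ ≤ ε / (4A)` absorbs the first term into
`(ε / 2) (Q u + N u)`, while the multiplier estimate for `f_j` at `ε / 4` handles the second.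
-/

section Multipliers

variable {X 𝕜 : Type*} [MeasurableSpace X] {μ : Measure X} [NormedRing 𝕜]
  {p : ENNReal}

lemma eLpNorm_mul_le_of_ae_norm_le {g u : X → 𝕜} {c : ℝ} (hg : ∀ᵐ x ∂μ, ‖g x‖ ≤ c) :
    eLpNorm (fun x => g x * u x) p μ ≤ ENNReal.ofReal c * eLpNorm u p μ :=
  eLpNorm_le_mul_eLpNorm_of_ae_le_mul
    (hg.mono fun x hx => (norm_mul_le _ _).trans (by gcongr)) p

lemma eLpNorm_mul_ne_top_of_ae_norm_le {g u : X → 𝕜} {c : ℝ}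
    (hg : ∀ᵐ x ∂μ, ‖g x‖ ≤ c) (hu : eLpNorm u p μ ≠ ⊤) :
    eLpNorm (fun x => g x * u x) p μ ≠ ⊤ :=
  ne_top_of_le_ne_top (ENNReal.mul_ne_top ENNReal.ofReal_ne_top hu)
    (eLpNorm_mul_le_of_ae_norm_le hg)

lemma ENNReal.toReal_sq_le_two_mul_sq_add {a b c : ENNReal} (hb : b ≠ ⊤) (hc : c ≠ ⊤)
    (h : a ≤ b + c) : a.toReal ^ 2 ≤ 2 * b.toReal ^ 2 + 2 * c.toReal ^ 2 := by
  have hle : a.toReal ≤ b.toReal + c.toReal := by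
    rw [← ENNReal.toReal_add hb hc]
    exact ENNReal.toReal_mono (ENNReal.add_ne_top.mpr ⟨hb, hc⟩) h
  nlinarith [sq_nonneg (b.toReal - c.toReal), ENNReal.toReal_nonneg (a := a)]

lemma toReal_eLpNorm_mul_sq_le_of_ae_norm_sub_le (hp : 1 ≤ p) {g h u : X → 𝕜} {δ : ℝ}
    (hδ : 0 ≤ δ) (hg : AEStronglyMeasurable g μ) (hh : AEStronglyMeasurable h μ)
    (hu : AEStronglyMeasurable u μ) (hgh : ∀ᵐ x ∂μ, ‖g x - h x‖ ≤ δ)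
    (hu_fin : eLpNorm u p μ ≠ ⊤) (hhu_fin : eLpNorm (fun x => h x * u x) p μ ≠ ⊤) :
    (eLpNorm (fun x => g x * u x) p μ).toReal ^ 2 ≤
      2 * δ ^ 2 * (eLpNorm u p μ).toReal ^ 2
        + 2 * (eLpNorm (fun x => h x * u x) p μ).toReal ^ 2 := by
  have hsplit : (fun x => g x * u x) = (fun x => (g x - h x) * u x) + fun x => h x * u x := by
    funext x; simp [sub_mul]
  have htri : eLpNorm (fun x => g x * u x) p μ ≤
      eLpNorm (fun x => (g x - h x) * u x) p μ + eLpNorm (fun x => h x * u x) p μ := by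
    rw [hsplit]
    exact eLpNorm_add_le ((hg.sub hh).mul hu) (hh.mul hu) hp
  have hdiff : (eLpNorm (fun x => (g x - h x) * u x) p μ).toReal ≤
      δ * (eLpNorm u p μ).toReal := by
    have := ENNReal.toReal_mono (ENNReal.mul_ne_top ENNReal.ofReal_ne_top hu_fin)
      (eLpNorm_mul_le_of_ae_norm_le (u := u) hgh)
    rwa [ENNReal.toReal_mul, ENNReal.toReal_ofReal hδ] at this
  calc _ ≤ 2 * (eLpNorm (fun x => (g x - h x) * u x) p μ).toReal ^ 2
          + 2 * (eLpNorm (fun x => h x * u x) p μ).toReal ^ 2 :=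
        ENNReal.toReal_sq_le_two_mul_sq_add
          (eLpNorm_mul_ne_top_of_ae_norm_le hgh hu_fin) hhu_fin htri
    _ ≤ 2 * (δ * (eLpNorm u p μ).toReal) ^ 2
          + 2 * (eLpNorm (fun x => h x * u x) p μ).toReal ^ 2 := by
        gcongr
    _ = _ := by ring

end Multipliers

theorem stmt13_general {X : Type*} [MeasurableSpace X] (μ : Measure X)
    (D : Set (Lp ℂ 2 μ)) (Q N : Lp ℂ 2 μ → ℝ)
    (hbasic : ∃ A > (0 : ℝ), ∀ u ∈ D, (‖u‖ : ℝ) ^ 2 ≤ A * (Q u + N u))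
    (f : ℕ → X → ℂ) (flim : X → ℂ)
    (hf : ∀ j, Measurable (f j)) (hflim : Measurable flim)
    (hfb : ∀ j, ∃ M : ℝ, ∀ᵐ x ∂μ, ‖f j x‖ ≤ M)
    (hmult : ∀ j, ∀ ε > (0 : ℝ), ∃ C > (0 : ℝ), ∀ u ∈ D,
      ((eLpNorm (fun x => f j x * u x) 2 μ).toReal) ^ 2 ≤ ε * Q u + C * N u)
    (hunif : TendstoUniformly f flim atTop) :
    ∀ ε > (0 : ℝ), ∃ C > (0 : ℝ), ∀ u ∈ D,
      ((eLpNorm (fun x => flim x * u x) 2 μ).toReal) ^ 2 ≤ ε * Q u + C * N u := by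
  intro ε hε
  obtain ⟨A, hA, hbasic⟩ := hbasic
  set δ := Real.sqrt (ε / (4 * A))
  have hδ_sq : δ ^ 2 * A = ε / 4 := by
    rw [Real.sq_sqrt (by positivity)]; field_simp
  obtain ⟨j, hj⟩ := (Metric.tendstoUniformly_iff.mp hunif δ (by positivity)).exists
  obtain ⟨M, hM⟩ := hfb j
  obtain ⟨C, hC, hmult⟩ := hmult j (ε / 4) (by positivity)
  refine ⟨ε / 2 + 2 * C, by positivity, fun u hu => ?_⟩
  have hu_fin := (Lp.eLpNorm_lt_top u).ne
  calc _ ≤ 2 * δ ^ 2 * ‖u‖ ^ 2 + 2 * (eLpNorm (fun x => f j x * u x) 2 μ).toReal ^ 2 :=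
        toReal_eLpNorm_mul_sq_le_of_ae_norm_sub_le one_le_two (by positivity)
          hflim.aestronglyMeasurable (hf j).aestronglyMeasurable (Lp.aestronglyMeasurable u)
          (ae_of_all _ fun x => (dist_eq_norm (flim x) (f j x) ▸ hj x).le) hu_fin
          (eLpNorm_mul_ne_top_of_ae_norm_le hM hu_fin)
    _ ≤ 2 * δ ^ 2 * (A * (Q u + N u)) + 2 * (ε / 4 * Q u + C * N u) := by
        gcongr
        exacts [hbasic u hu, hmult u hu]
    _ = ε * Q u + (ε / 2 + 2 * C) * N u := by
        linear_combination 2 * (Q u + N u) * hδ_sq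

theorem stmt13 {X : Type*} [MeasurableSpace X] (μ : Measure X)
    (D : Set (Lp ℂ 2 μ)) (Q N : Lp ℂ 2 μ → ℝ)
    (hQ : ∀ u, 0 ≤ Q u) (hN : ∀ u, 0 ≤ N u)
    (hbasic : ∃ A > (0 : ℝ), ∀ u ∈ D, (‖u‖ : ℝ) ^ 2 ≤ A * (Q u + N u))
    (f : ℕ → X → ℂ) (flim : X → ℂ)
    (hf : ∀ j, Measurable (f j)) (hflim : Measurable flim)
    (hfb : ∀ j, ∃ M : ℝ, ∀ᵐ x ∂μ, ‖f j x‖ ≤ M) (hflimb : ∃ M : ℝ, ∀ᵐ x ∂μ, ‖flim x‖ ≤ M)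
    (hmult : ∀ j, ∀ ε > (0 : ℝ), ∃ C > (0 : ℝ), ∀ u ∈ D,
      ((eLpNorm (fun x => f j x * u x) 2 μ).toReal) ^ 2 ≤ ε * Q u + C * N u)
    (hunif : TendstoUniformly f flim atTop) :
    ∀ ε > (0 : ℝ), ∃ C > (0 : ℝ), ∀ u ∈ D,
      ((eLpNorm (fun x => flim x * u x) 2 μ).toReal) ^ 2 ≤ ε * Q u + C * N u :=
  stmt13_general μ D Q N hbasic f flim hf hflim hfb hmult hunif
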